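/- arXiv:2103.15050 — 4 statements merged into one kernel-verified Lean document; each statement's English description precedes it below -/
import Mathlib

section
/- At every point of the equilateral triangle manifold the defining map is a submersion: if (x1, x2, x3) ∈ M with d > 0, then the linear map from (ℝ³)³ to ℝ² sending ξ = (ξ1, ξ2, ξ3) to (E1(ξ), E2(ξ)) is surjective. -/
open RealInnerProductSpace

/-- At every point of the equilateral triangle manifold the defining map is
a submersion: the linear map `ξ = (ξ1, ξ2, ξ3) ↦ (E1(ξ), E2(ξ))` from `(ℝ³)³` to `ℝ²`
is surjective. -/
theorem defining_map_submersion (d : ℝ) (hd : 0 < d)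
    (x1 x2 x3 : EuclideanSpace ℝ (Fin 3))
    (h1 : ⟪x1 - x2, x2 - x3⟫ = -d ^ 2 / 2)
    (h2 : ⟪x1 - x3, x2 - x3⟫ = d ^ 2 / 2) :
    Function.Surjective
      (fun ξ : EuclideanSpace ℝ (Fin 3) × EuclideanSpace ℝ (Fin 3) ×
          EuclideanSpace ℝ (Fin 3) =>
        ((⟪ξ.1 - ξ.2.1, x2 - x3⟫ + ⟪x1 - x2, ξ.2.1 - ξ.2.2⟫,
          ⟪ξ.1 - ξ.2.2, x2 - x3⟫ + ⟪x1 - x3, ξ.2.1 - ξ.2.2⟫) : ℝ × ℝ)) := by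
  rintro ⟨u, v⟩
  have hd2 : d ^ 2 ≠ 0 := by positivity
  set a : EuclideanSpace ℝ (Fin 3) := x2 - x3 with ha_def
  have ha : ⟪a, a⟫ = d ^ 2 := by
    have h3 := inner_sub_left (𝕜 := ℝ) (x1 - x3) (x1 - x2) a
    have h4 : (x1 - x3) - (x1 - x2) = a := by rw [ha_def]; abel
    rw [h4, h1, h2] at h3
    linarith
  set t : ℝ := (v - u) / (2 * d ^ 2) with ht
  set s : ℝ := (u + 3 * v) / (4 * d ^ 2) with hs
  refine ⟨(s • a, t • a, 0), ?_⟩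
  have e1 : ⟪s • a - t • a, a⟫ = (s - t) * d ^ 2 := by
    rw [inner_sub_left, real_inner_smul_left, real_inner_smul_left, ha]; ring
  have e2 : ⟪x1 - x2, t • a⟫ = t * (-d ^ 2 / 2) := by
    rw [real_inner_smul_right, h1]
  have e3 : ⟪s • a, a⟫ = s * d ^ 2 := by rw [real_inner_smul_left, ha]
  have e4 : ⟪x1 - x3, t • a⟫ = t * (d ^ 2 / 2) := by
    rw [real_inner_smul_right, h2]
  simp only [sub_zero, e1, e2, e3, e4, Prod.mk.injEq]
  constructor <;> (rw [ht, hs]; field_simp; ring)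
end

section
/- The two normal directions are linearly independent on the manifold: if (x1, x2, x3) ∈ M with d > 0, then the triples N1 = X·U_1^0 and N2 = X·U_0^1 are linearly independent in (ℝ³)³; equivalently, the 2×2 Gram matrix S = [[⟨N1,N1⟩, ⟨N1,N2⟩], [⟨N2,N1⟩, ⟨N2,N2⟩]] is positive definite, and in particular its squared Frobenius norm is strictly smaller than the square of its trace. -/
open RealInnerProductSpace

/-- The triple `X·U_α^β = (η1, η2, η3)` from the paper. -/
noncomputable def XU (x1 x2 x3 : EuclideanSpace ℝ (Fin 3)) (α β : ℝ) :
    EuclideanSpace ℝ (Fin 3) × EuclideanSpace ℝ (Fin 3) × EuclideanSpace ℝ (Fin 3) :=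
  ((α + β) • (x2 - x3),
   (α + β) • x1 - (2 * α) • x2 + (α - β) • x3,
   -((α + β) • x1) + (α - β) • x2 + (2 * β) • x3)

/-- The inner product of two triples of vectors in `ℝ³`. -/
noncomputable def tripleInner
    (ξ η : EuclideanSpace ℝ (Fin 3) × EuclideanSpace ℝ (Fin 3) ×
      EuclideanSpace ℝ (Fin 3)) : ℝ :=
  ⟪ξ.1, η.1⟫ + ⟪ξ.2.1, η.2.1⟫ + ⟪ξ.2.2, η.2.2⟫

/-- The 2×2 Gram matrix `S` of the two normal directions `N1 = X·U_1^0`, `N2 = X·U_0^1`. -/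
noncomputable def gramS (x1 x2 x3 : EuclideanSpace ℝ (Fin 3)) : Matrix (Fin 2) (Fin 2) ℝ :=
  !![tripleInner (XU x1 x2 x3 1 0) (XU x1 x2 x3 1 0),
     tripleInner (XU x1 x2 x3 1 0) (XU x1 x2 x3 0 1);
     tripleInner (XU x1 x2 x3 0 1) (XU x1 x2 x3 1 0),
     tripleInner (XU x1 x2 x3 0 1) (XU x1 x2 x3 0 1)]

/-!
With `a = x1 - x2` and `b = x2 - x3` the constraints say `‖b‖² = d²` and `⟪a, b⟫ = -d²/2`,
while `N1 = (b, a - b, -a)` and `N2 = (b, a + b, -a - 2b)`. The Gram matrix is then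
`S = [[A, B], [B, A]]` with `A = 2‖a‖² + 3d²` and `B = 2‖a‖² - d²`; since `A - B = 4d²` and
`A + B = 4‖a‖² + 2d²` are positive, `S` is positive definite. Hence `det S > 0`, which is the
Frobenius inequality, and `N1`, `N2` are independent: a vanishing combination `sN1 + tN2` would
make the quadratic form of `S` vanish at `(s, t)`.
-/

lemma Matrix.posDef_fin_two {a b c : ℝ} (ha : 0 < a) (hdet : b ^ 2 < a * c) :
    (!![a, b; b, c]).PosDef := by
  rw [Matrix.posDef_iff_dotProduct_mulVec]
  refine ⟨?_, fun x hx => ?_⟩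
  · ext i j
    fin_cases i <;> fin_cases j <;> simp
  · have hx' : x 0 ≠ 0 ∨ x 1 ≠ 0 := by
      by_contra! h0
      exact hx (funext fun i => by fin_cases i <;> simp [h0.1, h0.2])
    simp only [star_trivial, dotProduct, Matrix.mulVec, Fin.sum_univ_two, Matrix.cons_val_zero,
      Matrix.cons_val_one, Matrix.of_apply, Matrix.cons_val', Matrix.cons_val_fin_one,
      Matrix.empty_val']
    have hsum : 0 < (a * x 0 + b * x 1) ^ 2 + (a * c - b ^ 2) * x 1 ^ 2 := by
      by_cases h1 : x 1 = 0
      · have h0 : x 0 ≠ 0 := hx'.resolve_right (not_not.mpr h1)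
        rw [h1]
        nlinarith [sq_pos_of_ne_zero (mul_ne_zero ha.ne' h0)]
      · nlinarith [sq_nonneg (a * x 0 + b * x 1), mul_pos (sub_pos.2 hdet) (sq_pos_of_ne_zero h1)]
    refine pos_of_mul_pos_right (a := a) ?_ ha.le
    linear_combination hsum

lemma Matrix.PosDef.sum_sq_entries_lt_trace_sq {G : Matrix (Fin 2) (Fin 2) ℝ} (hG : G.PosDef) :
    G 0 0 ^ 2 + G 0 1 ^ 2 + G 1 0 ^ 2 + G 1 1 ^ 2 < (G 0 0 + G 1 1) ^ 2 := by
  have hdet := hG.det_pos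
  have hsymm : G 1 0 = G 0 1 := by simpa using congrFun (congrFun hG.1 0) 1
  rw [Matrix.det_fin_two] at hdet
  nlinarith

lemma tripleInner_smul_add_smul_left (s t : ℝ)
    (ξ η ζ : EuclideanSpace ℝ (Fin 3) × EuclideanSpace ℝ (Fin 3) × EuclideanSpace ℝ (Fin 3)) :
    tripleInner (s • ξ + t • η) ζ = s * tripleInner ξ ζ + t * tripleInner η ζ := by
  simp only [tripleInner, Prod.fst_add, Prod.snd_add, Prod.smul_fst, Prod.smul_snd,
    inner_add_left, real_inner_smul_left]
  ring

lemma tripleInner_zero_left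
    (ζ : EuclideanSpace ℝ (Fin 3) × EuclideanSpace ℝ (Fin 3) × EuclideanSpace ℝ (Fin 3)) :
    tripleInner 0 ζ = 0 := by
  simp [tripleInner]

lemma linearIndependent_pair_of_posDef_tripleGram
    {ξ η : EuclideanSpace ℝ (Fin 3) × EuclideanSpace ℝ (Fin 3) × EuclideanSpace ℝ (Fin 3)}
    (h : (!![tripleInner ξ ξ, tripleInner ξ η; tripleInner η ξ, tripleInner η η]).PosDef) :
    LinearIndependent ℝ ![ξ, η] := by
  rw [LinearIndependent.pair_iff]
  intro s t hst
  have hξ : s * tripleInner ξ ξ + t * tripleInner η ξ = 0 := by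
    rw [← tripleInner_smul_add_smul_left, hst, tripleInner_zero_left]
  have hη : s * tripleInner ξ η + t * tripleInner η η = 0 := by
    rw [← tripleInner_smul_add_smul_left, hst, tripleInner_zero_left]
  by_contra hne
  have hx : ![s, t] ≠ 0 := fun h0 =>
    hne ⟨by simpa using congrFun h0 0, by simpa using congrFun h0 1⟩
  have hQ := (Matrix.posDef_iff_dotProduct_mulVec.mp h).2 hx
  simp only [star_trivial, dotProduct, Matrix.mulVec, Fin.sum_univ_two, Matrix.cons_val_zero,
    Matrix.cons_val_one, Matrix.of_apply, Matrix.cons_val', Matrix.cons_val_fin_one,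
    Matrix.empty_val'] at hQ
  linarith [show s * (s * tripleInner ξ ξ + t * tripleInner η ξ) +
    t * (s * tripleInner ξ η + t * tripleInner η η) = 0 by rw [hξ, hη]; ring]

lemma XU_one_zero (x1 x2 x3 : EuclideanSpace ℝ (Fin 3)) :
    XU x1 x2 x3 1 0 = (x2 - x3, (x1 - x2) - (x2 - x3), -(x1 - x2)) := by
  simp only [XU, Prod.mk.injEq]
  refine ⟨by module, by module, by module⟩

lemma XU_zero_one (x1 x2 x3 : EuclideanSpace ℝ (Fin 3)) :
    XU x1 x2 x3 0 1 = (x2 - x3, (x1 - x2) + (x2 - x3), -(x1 - x2) - (2 : ℝ) • (x2 - x3)) := by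
  simp only [XU, Prod.mk.injEq]
  refine ⟨by module, by module, by module⟩

lemma gramS_eq (x1 x2 x3 : EuclideanSpace ℝ (Fin 3)) :
    gramS x1 x2 x3 =
      !![2 * ‖x1 - x2‖ ^ 2 - 2 * ⟪x1 - x2, x2 - x3⟫ + 2 * ‖x2 - x3‖ ^ 2,
         2 * ‖x1 - x2‖ ^ 2 + 2 * ⟪x1 - x2, x2 - x3⟫;
         2 * ‖x1 - x2‖ ^ 2 + 2 * ⟪x1 - x2, x2 - x3⟫,
         2 * ‖x1 - x2‖ ^ 2 + 6 * ⟪x1 - x2, x2 - x3⟫ + 6 * ‖x2 - x3‖ ^ 2] := by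
  rw [Matrix.eta_fin_two (gramS x1 x2 x3)]
  simp only [gramS, Matrix.of_apply, Matrix.cons_val_zero, Matrix.cons_val_one, XU_one_zero,
    XU_zero_one, tripleInner]
  generalize x1 - x2 = a
  generalize x2 - x3 = b
  simp only [← real_inner_self_eq_norm_sq, inner_sub_left, inner_sub_right, inner_add_left,
    inner_add_right, inner_neg_left, inner_neg_right, real_inner_smul_left, real_inner_smul_right,
    real_inner_comm a b]
  ring_nf

lemma norm_sub_sq_eq_sq_of_inner_eq (d : ℝ) (x1 x2 x3 : EuclideanSpace ℝ (Fin 3))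
    (h1 : ⟪x1 - x2, x2 - x3⟫ = -d ^ 2 / 2) (h2 : ⟪x1 - x3, x2 - x3⟫ = d ^ 2 / 2) :
    ‖x2 - x3‖ ^ 2 = d ^ 2 := by
  have hsplit : x1 - x3 = (x1 - x2) + (x2 - x3) := by abel
  rw [hsplit, inner_add_left, h1, real_inner_self_eq_norm_sq] at h2
  linarith

/-- The two normal directions are linearly independent on the manifold:
if `(x1, x2, x3) ∈ M` with `d > 0`, then `N1 = X·U_1^0` and `N2 = X·U_0^1` are linearly
independent in `(ℝ³)³`; equivalently, the 2×2 Gram matrix `S` is positive definite, and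
in particular its squared Frobenius norm is strictly smaller than the square of its
trace. -/
theorem normals_linearly_independent (d : ℝ) (hd : 0 < d)
    (x1 x2 x3 : EuclideanSpace ℝ (Fin 3))
    (h1 : ⟪x1 - x2, x2 - x3⟫ = -d ^ 2 / 2)
    (h2 : ⟪x1 - x3, x2 - x3⟫ = d ^ 2 / 2) :
    LinearIndependent ℝ ![XU x1 x2 x3 1 0, XU x1 x2 x3 0 1] ∧
    (gramS x1 x2 x3).PosDef ∧
    (gramS x1 x2 x3 0 0) ^ 2 + (gramS x1 x2 x3 0 1) ^ 2 +
      (gramS x1 x2 x3 1 0) ^ 2 + (gramS x1 x2 x3 1 1) ^ 2 <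
      (gramS x1 x2 x3 0 0 + gramS x1 x2 x3 1 1) ^ 2 := by
  have hside := norm_sub_sq_eq_sq_of_inner_eq d x1 x2 x3 h1 h2
  have hpos : (gramS x1 x2 x3).PosDef := by
    rw [gramS_eq, h1, hside]
    have hd2 : 0 < d ^ 2 := by positivity
    have hq : 0 ≤ ‖x1 - x2‖ ^ 2 := by positivity
    apply Matrix.posDef_fin_two <;> nlinarith
  exact ⟨linearIndependent_pair_of_posDef_tripleGram hpos, hpos, hpos.sum_sq_entries_lt_trace_sq⟩
end

section
/- The orthogonal projection onto the tangent space is well defined: if (x1, x2, x3) ∈ M with d > 0, then for every triple Z ∈ (ℝ³)³ there exist unique reals α, β such that S·(α, β)ᵀ = (⟨Z, N1⟩, ⟨Z, N2⟩)ᵀ, and for these α, β the triple Z − X·U_α^β satisfies the tangent equations E1(Z − X·U_α^β) = 0 and E2(Z − X·U_α^β) = 0. -/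
open RealInnerProductSpace

/-- The tangent equation `E1(ξ) = 0` left-hand side. -/
noncomputable def E1 (x1 x2 x3 : EuclideanSpace ℝ (Fin 3))
    (ξ : EuclideanSpace ℝ (Fin 3) × EuclideanSpace ℝ (Fin 3) ×
      EuclideanSpace ℝ (Fin 3)) : ℝ :=
  ⟪ξ.1 - ξ.2.1, x2 - x3⟫ + ⟪x1 - x2, ξ.2.1 - ξ.2.2⟫

/-- The tangent equation `E2(ξ) = 0` left-hand side. -/
noncomputable def E2 (x1 x2 x3 : EuclideanSpace ℝ (Fin 3))
    (ξ : EuclideanSpace ℝ (Fin 3) × EuclideanSpace ℝ (Fin 3) ×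
      EuclideanSpace ℝ (Fin 3)) : ℝ :=
  ⟪ξ.1 - ξ.2.2, x2 - x3⟫ + ⟪x1 - x3, ξ.2.1 - ξ.2.2⟫

/-!
Both equations of the system say that `Z − X·U_α^β` is orthogonal to `N1` and `N2`, and
`E1`, `E2` are exactly the inner products with `N1`, `N2`; so the second claim is linearity of
`α, β ↦ X·U_α^β`. For uniqueness, on `M` one has `|x2 − x3|² = d²` and
`⟪x1 − x2, x2 − x3⟫ = −d²/2`, which gives `S = [[2u + 3d², 2u − d²], [2u − d², 2u + 3d²]]`
with `u = |x1 − x2|²`, so `det S = 8d²(2u + d²) > 0`.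
-/

theorem existsUnique_of_det_ne_zero {a b c d e f : ℝ} (hdet : a * d - b * c ≠ 0) :
    ∃! p : ℝ × ℝ, a * p.1 + b * p.2 = e ∧ c * p.1 + d * p.2 = f := by
  refine ⟨((d * e - b * f) / (a * d - b * c), (a * f - c * e) / (a * d - b * c)), ?_, ?_⟩
  · constructor <;> dsimp only <;>
      rw [mul_div_assoc', mul_div_assoc', ← add_div, div_eq_iff hdet] <;> ring
  · rintro ⟨q1, q2⟩ ⟨hq1, hq2⟩
    dsimp only at hq1 hq2
    have hq1' : q1 = (d * e - b * f) / (a * d - b * c) := by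
      rw [eq_div_iff hdet]
      linear_combination d * hq1 - b * hq2
    have hq2' : q2 = (a * f - c * e) / (a * d - b * c) := by
      rw [eq_div_iff hdet]
      linear_combination a * hq2 - c * hq1
    rw [hq1', hq2']

section

variable (x1 x2 x3 : EuclideanSpace ℝ (Fin 3))

theorem tripleInner_sub_XU_left (α β : ℝ)
    (Z W : EuclideanSpace ℝ (Fin 3) × EuclideanSpace ℝ (Fin 3) × EuclideanSpace ℝ (Fin 3)) :
    tripleInner (Z - XU x1 x2 x3 α β) W =
      tripleInner Z W - α * tripleInner (XU x1 x2 x3 1 0) W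
        - β * tripleInner (XU x1 x2 x3 0 1) W := by
  simp only [tripleInner, XU, Prod.fst_sub, Prod.snd_sub, inner_sub_left, inner_add_left,
    inner_smul_left, inner_neg_left, conj_trivial]
  ring

theorem E1_eq_tripleInner
    (ξ : EuclideanSpace ℝ (Fin 3) × EuclideanSpace ℝ (Fin 3) × EuclideanSpace ℝ (Fin 3)) :
    E1 x1 x2 x3 ξ = tripleInner ξ (XU x1 x2 x3 1 0) := by
  rw [E1, real_inner_comm _ (x1 - x2)]
  simp only [tripleInner, XU, inner_sub_left, inner_sub_right, inner_add_right,
    inner_smul_right, inner_neg_right]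
  ring

theorem E2_eq_tripleInner
    (ξ : EuclideanSpace ℝ (Fin 3) × EuclideanSpace ℝ (Fin 3) × EuclideanSpace ℝ (Fin 3)) :
    E2 x1 x2 x3 ξ = tripleInner ξ (XU x1 x2 x3 0 1) := by
  rw [E2, real_inner_comm _ (x1 - x3)]
  simp only [tripleInner, XU, inner_sub_left, inner_sub_right, inner_add_right,
    inner_smul_right, inner_neg_right]
  ring

variable {x1 x2 x3} {d : ℝ}

theorem gram_XU_entries (h1 : ⟪x1 - x2, x2 - x3⟫ = -d ^ 2 / 2)
    (h2 : ⟪x1 - x3, x2 - x3⟫ = d ^ 2 / 2) :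
    tripleInner (XU x1 x2 x3 1 0) (XU x1 x2 x3 1 0) = 2 * ‖x1 - x2‖ ^ 2 + 3 * d ^ 2 ∧
    tripleInner (XU x1 x2 x3 0 1) (XU x1 x2 x3 1 0) = 2 * ‖x1 - x2‖ ^ 2 - d ^ 2 ∧
    tripleInner (XU x1 x2 x3 1 0) (XU x1 x2 x3 0 1) = 2 * ‖x1 - x2‖ ^ 2 - d ^ 2 ∧
    tripleInner (XU x1 x2 x3 0 1) (XU x1 x2 x3 0 1) = 2 * ‖x1 - x2‖ ^ 2 + 3 * d ^ 2 := by
  have c12 : ⟪x1, x2⟫ = ⟪x2, x1⟫ := real_inner_comm _ _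
  have c13 : ⟪x1, x3⟫ = ⟪x3, x1⟫ := real_inner_comm _ _
  have c23 : ⟪x2, x3⟫ = ⟪x3, x2⟫ := real_inner_comm _ _
  rw [← real_inner_self_eq_norm_sq]
  simp only [tripleInner, XU, inner_sub_left, inner_sub_right, inner_add_left, inner_add_right,
    inner_smul_left, inner_smul_right, inner_neg_left, inner_neg_right, conj_trivial] at *
  refine ⟨by linarith, by linarith, by linarith, by linarith⟩

theorem gram_XU_det_pos (hd : d ≠ 0) (h1 : ⟪x1 - x2, x2 - x3⟫ = -d ^ 2 / 2)
    (h2 : ⟪x1 - x3, x2 - x3⟫ = d ^ 2 / 2) :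
    0 < tripleInner (XU x1 x2 x3 1 0) (XU x1 x2 x3 1 0) *
        tripleInner (XU x1 x2 x3 0 1) (XU x1 x2 x3 0 1) -
      tripleInner (XU x1 x2 x3 0 1) (XU x1 x2 x3 1 0) *
        tripleInner (XU x1 x2 x3 1 0) (XU x1 x2 x3 0 1) := by
  obtain ⟨h11, h21, h12, h22⟩ := gram_XU_entries h1 h2
  rw [h11, h21, h12, h22]
  calc 0 < 8 * d ^ 2 * (2 * ‖x1 - x2‖ ^ 2 + d ^ 2) := by positivity
    _ = _ := by ring

end

/-- The orthogonal projection onto the tangent space is well defined: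
if `(x1, x2, x3) ∈ M` with `d > 0`, then for every triple `Z` there exist unique reals
`α, β` solving `S·(α, β)ᵀ = (⟨Z, N1⟩, ⟨Z, N2⟩)ᵀ`, and for these `α, β` the triple
`Z − X·U_α^β` satisfies the tangent equations. -/
theorem orthogonal_projection_well_defined (d : ℝ) (hd : 0 < d)
    (x1 x2 x3 : EuclideanSpace ℝ (Fin 3))
    (h1 : ⟪x1 - x2, x2 - x3⟫ = -d ^ 2 / 2)
    (h2 : ⟪x1 - x3, x2 - x3⟫ = d ^ 2 / 2)
    (Z : EuclideanSpace ℝ (Fin 3) × EuclideanSpace ℝ (Fin 3) ×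
      EuclideanSpace ℝ (Fin 3)) :
    (∃! p : ℝ × ℝ,
      tripleInner (XU x1 x2 x3 1 0) (XU x1 x2 x3 1 0) * p.1 +
        tripleInner (XU x1 x2 x3 0 1) (XU x1 x2 x3 1 0) * p.2 =
        tripleInner Z (XU x1 x2 x3 1 0) ∧
      tripleInner (XU x1 x2 x3 1 0) (XU x1 x2 x3 0 1) * p.1 +
        tripleInner (XU x1 x2 x3 0 1) (XU x1 x2 x3 0 1) * p.2 =
        tripleInner Z (XU x1 x2 x3 0 1)) ∧
    (∀ p : ℝ × ℝ,
      (tripleInner (XU x1 x2 x3 1 0) (XU x1 x2 x3 1 0) * p.1 +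
        tripleInner (XU x1 x2 x3 0 1) (XU x1 x2 x3 1 0) * p.2 =
        tripleInner Z (XU x1 x2 x3 1 0) ∧
      tripleInner (XU x1 x2 x3 1 0) (XU x1 x2 x3 0 1) * p.1 +
        tripleInner (XU x1 x2 x3 0 1) (XU x1 x2 x3 0 1) * p.2 =
        tripleInner Z (XU x1 x2 x3 0 1)) →
      E1 x1 x2 x3 (Z - XU x1 x2 x3 p.1 p.2) = 0 ∧
      E2 x1 x2 x3 (Z - XU x1 x2 x3 p.1 p.2) = 0) := by
  refine ⟨existsUnique_of_det_ne_zero (gram_XU_det_pos hd.ne' h1 h2).ne', ?_⟩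
  rintro ⟨α, β⟩ ⟨hα, hβ⟩
  rw [E1_eq_tripleInner, E2_eq_tripleInner, tripleInner_sub_XU_left, tripleInner_sub_XU_left]
  constructor <;> linarith
end

section
/- The retraction fixes manifold points at the zero tangent vector: if (x1, x2, x3) ∈ M with d > 0, then taking γ = 1 (so that u = (x1, x2, x3)) satisfies the balancing equation ⟪u1 − u2, u2 − u3⟫ = −⟪u1 − u3, u2 − u3⟫, the scaling denominator equals ⟪x1 − x3, x2 − x3⟫ = d²/2 > 0, and the scaled output √(d²/2 / ⟪x1 − x3, x2 − x3⟫)·(x1, x2, x3) equals (x1, x2, x3) itself. -/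
open RealInnerProductSpace

/-- The retraction fixes manifold points at the zero tangent vector:
if `(x1, x2, x3) ∈ M` with `d > 0`, then with `γ = 1` (so `u = (x1, x2, x3)`) the
balancing equation holds, the scaling denominator equals `⟪x1 − x3, x2 − x3⟫ = d²/2 > 0`,
and the scaled output `√(d²/2 / ⟪x1 − x3, x2 − x3⟫)·(x1, x2, x3)` equals
`(x1, x2, x3)` itself. -/
theorem retraction_fixes_manifold_points (d : ℝ) (hd : 0 < d)
    (x1 x2 x3 : EuclideanSpace ℝ (Fin 3))
    (h1 : ⟪x1 - x2, x2 - x3⟫ = -d ^ 2 / 2)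
    (h2 : ⟪x1 - x3, x2 - x3⟫ = d ^ 2 / 2) :
    ⟪x1 - x2, x2 - x3⟫ = -⟪x1 - x3, x2 - x3⟫ ∧
    (⟪x1 - x3, x2 - x3⟫ = d ^ 2 / 2 ∧ 0 < ⟪x1 - x3, x2 - x3⟫) ∧
    Real.sqrt (d ^ 2 / 2 / ⟪x1 - x3, x2 - x3⟫) • x1 = x1 ∧
    Real.sqrt (d ^ 2 / 2 / ⟪x1 - x3, x2 - x3⟫) • x2 = x2 ∧
    Real.sqrt (d ^ 2 / 2 / ⟪x1 - x3, x2 - x3⟫) • x3 = x3 := by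
  have hpos : (0:ℝ) < d ^ 2 / 2 := by positivity
  have hs : Real.sqrt (d ^ 2 / 2 / ⟪x1 - x3, x2 - x3⟫) = 1 := by
    rw [h2, div_self hpos.ne', Real.sqrt_one]
  refine ⟨by rw [h1, h2]; ring, ⟨h2, h2 ▸ hpos⟩, ?_, ?_, ?_⟩ <;> rw [hs, one_smul]
end
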